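/- arXiv:1111.0784 — 3 statements merged into one kernel-verified Lean document; each statement's English description precedes it below -/
import Mathlib

section
/- A regular language L over a finite alphabet A is star-free if and only if there exists N in the natural numbers such that for all n > N and all words u, v, w in A*, the word u v^n w lies in L if and only if u v^(n+1) w lies in L. -/
/-- Star-free languages over an alphabet `A`: the closure of the finite
languages under concatenation, union, intersection, and complementation. -/
inductive StarFree {A : Type*} : Language A → Prop
  | finite (L : Language A) : L.Finite → StarFree L
  | concat (L₁ L₂ : Language A) : StarFree L₁ → StarFree L₂ → StarFree (L₁ * L₂)
  | union (L₁ L₂ : Language A) : StarFree L₁ → StarFree L₂ → StarFree (L₁ ⊔ L₂)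
  | inter (L₁ L₂ : Language A) : StarFree L₁ → StarFree L₂ → StarFree (L₁ ⊓ L₂)
  | compl (L : Language A) : StarFree L → StarFree Lᶜ

/-- `wpow v n` is the word `v` concatenated with itself `n` times. -/
def wpow {A : Type*} (v : List A) : ℕ → List A
  | 0 => []
  | n + 1 => v ++ wpow v n

/-!
Star-free implies aperiodic by induction on star-free expressions: in a product `L₁ L₂`, a
factorisation of `u vⁿ w` with `n` large leaves many copies of `v` in one of the two factors, and
those can be pumped.

Conversely (Diekert and Kufleitner's local divisor proof of Schützenberger's theorem), the
syntactic monoid of a regular language is finite, and the hypothesis makes it aperiodic. For a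
finite aperiodic monoid `M` and `f : A → M`, the words over an alphabet `B` with value `m` form a
star-free language, by induction on `|M|` and then on `B`. Unless all letters of `B` have value
`1` (then the language is `B*` or empty), pick a letter `c ∈ B` with `f c ≠ 1` and cut a word at
its first and last `c`: the outer pieces avoid `c`, and the middle piece `c u₁ c ⋯ c uₖ c` is
evaluated in the local divisor `cM ∩ Mc` at `f c`. That monoid is again aperiodic, and smaller
than `M` because aperiodic monoids have no nontrivial units, so `1 ∉ cM ∩ Mc`.
-/

section

variable {A : Type*}

theorem wpow_add (v : List A) (m n : ℕ) : wpow v (m + n) = wpow v m ++ wpow v n := by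
  induction m with
  | zero => simp [wpow]
  | succ m ih => simp [Nat.succ_add, wpow, ih]

theorem wpow_nil (n : ℕ) : wpow ([] : List A) n = [] := by
  induction n with
  | zero => rfl
  | succ n ih => simp [wpow, ih]

theorem length_wpow (v : List A) (n : ℕ) : (wpow v n).length = n * v.length := by
  induction n with
  | zero => simp [wpow]
  | succ n ih => simp [wpow, ih, Nat.succ_mul, Nat.add_comm]

theorem append_wpow_append_append (u p q w : List A) (i j : ℕ) :
    u ++ wpow (p ++ q) i ++ p ++ (q ++ wpow (p ++ q) j ++ w) =
      u ++ wpow (p ++ q) (i + 1 + j) ++ w := by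
  rw [Nat.add_assoc, wpow_add, Nat.add_comm 1 j]
  simp [wpow]

theorem append_eq_wpow_append {x y v w : List A} {n : ℕ} (h : x ++ y = wpow v n ++ w) :
    (∃ i j p q, v = p ++ q ∧ i + 1 + j = n ∧ x = wpow v i ++ p ∧ y = q ++ wpow v j ++ w) ∨
    (∃ w', w = w' ++ y ∧ x = wpow v n ++ w') := by
  induction n generalizing x with
  | zero => exact .inr ⟨x, by simpa [wpow] using h.symm, by simp [wpow]⟩
  | succ n ih =>
    rw [wpow, List.append_assoc, List.append_eq_append_iff] at h
    rcases h with ⟨q, rfl, rfl⟩ | ⟨x', rfl, h⟩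
    · exact .inl ⟨0, n, x, q, rfl, by omega, by simp [wpow], by simp⟩
    · rcases ih h.symm with ⟨i, j, p, q, hv, hij, rfl, rfl⟩ | ⟨w', rfl, rfl⟩
      · exact .inl ⟨i + 1, j, p, q, hv, by omega, by simp [wpow], rfl⟩
      · exact .inr ⟨w', rfl, by simp [wpow]⟩

theorem append_eq_append_wpow_append {x y u v w : List A} {n : ℕ}
    (h : x ++ y = u ++ wpow v n ++ w) :
    (∃ u', u = x ++ u' ∧ y = u' ++ wpow v n ++ w) ∨
    (∃ i j p q, v = p ++ q ∧ i + 1 + j = n ∧ x = u ++ wpow v i ++ p ∧ y = q ++ wpow v j ++ w) ∨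
    (∃ w', w = w' ++ y ∧ x = u ++ wpow v n ++ w') := by
  rw [List.append_assoc, List.append_eq_append_iff] at h
  rcases h with ⟨u', rfl, rfl⟩ | ⟨x', rfl, h⟩
  · exact .inl ⟨u', rfl, by simp⟩
  · rcases append_eq_wpow_append h.symm with ⟨i, j, p, q, hv, hij, rfl, rfl⟩ | ⟨w', rfl, rfl⟩
    · exact .inr (.inl ⟨i, j, p, q, hv, hij, by simp, rfl⟩)
    · exact .inr (.inr ⟨w', rfl, by simp⟩)

theorem Nat.iff_of_forall_iff_succ {P : ℕ → Prop} {N : ℕ} (h : ∀ n > N, P n ↔ P (n + 1))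
    {m n : ℕ} (hm : N < m) (hn : N < n) : P m ↔ P n := by
  have base : ∀ k, N < k → (P k ↔ P (N + 1)) := by
    intro k hk
    induction k, hk using Nat.le_induction with
    | base => rfl
    | succ k hk ih => exact (h k hk).symm.trans ih
  exact (base m hm).trans (base n hn).symm

namespace Language

variable {L L₁ L₂ : Language A} {N N₁ N₂ : ℕ}

def IsAperiodicAbove (L : Language A) (N : ℕ) : Prop :=
  ∀ m > N, ∀ n > N, ∀ u v w : List A, u ++ wpow v m ++ w ∈ L ↔ u ++ wpow v n ++ w ∈ L

theorem isAperiodicAbove_iff_succ : L.IsAperiodicAbove N ↔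
    ∀ n > N, ∀ u v w : List A, u ++ wpow v n ++ w ∈ L ↔ u ++ wpow v (n + 1) ++ w ∈ L :=
  ⟨fun h n hn u v w => h n hn (n + 1) (by omega) u v w,
    fun h _ hm _ hn u v w => Nat.iff_of_forall_iff_succ (fun k hk => h k hk u v w) hm hn⟩

theorem IsAperiodicAbove.mono (h : L.IsAperiodicAbove N) {N' : ℕ} (hN : N ≤ N') :
    L.IsAperiodicAbove N' :=
  fun m hm n hn => h m (by omega) n (by omega)

theorem IsAperiodicAbove.compl (h : L.IsAperiodicAbove N) : Lᶜ.IsAperiodicAbove N :=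
  fun m hm n hn u v w => not_congr (h m hm n hn u v w)

theorem IsAperiodicAbove.sup (h₁ : L₁.IsAperiodicAbove N) (h₂ : L₂.IsAperiodicAbove N) :
    (L₁ ⊔ L₂).IsAperiodicAbove N :=
  fun m hm n hn u v w => or_congr (h₁ m hm n hn u v w) (h₂ m hm n hn u v w)

theorem IsAperiodicAbove.inf (h₁ : L₁.IsAperiodicAbove N) (h₂ : L₂.IsAperiodicAbove N) :
    (L₁ ⊓ L₂).IsAperiodicAbove N :=
  fun m hm n hn u v w => and_congr (h₁ m hm n hn u v w) (h₂ m hm n hn u v w)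

theorem exists_isAperiodicAbove_of_finite (hL : L.Finite) : ∃ N, L.IsAperiodicAbove N := by
  obtain ⟨N, hN⟩ := (hL.image List.length).bddAbove
  have too_long : ∀ k > N, ∀ u v w : List A, v ≠ [] → u ++ wpow v k ++ w ∉ L := by
    intro k hk u v w hv hmem
    have hlen := hN (Set.mem_image_of_mem _ hmem)
    have hv' := List.length_pos_iff.2 hv
    simp only [List.length_append, length_wpow] at hlen
    nlinarith
  refine ⟨N, fun m hm n hn u v w => ?_⟩
  rcases eq_or_ne v [] with rfl | hv
  · rw [wpow_nil, wpow_nil]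
  · exact iff_of_false (too_long m hm u v w hv) (too_long n hn u v w hv)

theorem IsAperiodicAbove.mul (h₁ : L₁.IsAperiodicAbove N₁) (h₂ : L₂.IsAperiodicAbove N₂) :
    (L₁ * L₂).IsAperiodicAbove (N₁ + N₂ + 2) := by
  suffices ∀ m > N₁ + N₂ + 2, ∀ n > N₁ + N₂ + 2, ∀ u v w : List A,
      u ++ wpow v m ++ w ∈ L₁ * L₂ → u ++ wpow v n ++ w ∈ L₁ * L₂ from
    fun m hm n hn u v w => ⟨this m hm n hn u v w, this n hn m hm u v w⟩
  rintro m hm n hn u v w ⟨x, hx, y, hy, hxy : x ++ y = _⟩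
  rcases append_eq_append_wpow_append hxy with
    ⟨u', rfl, rfl⟩ | ⟨i, j, p, q, rfl, rfl, rfl, rfl⟩ | ⟨w', rfl, rfl⟩
  · exact ⟨x, hx, _, (h₂ _ (by omega) n (by omega) u' v w).1 hy, by simp⟩
  · suffices ∃ i' j', i' + 1 + j' = n ∧ u ++ wpow (p ++ q) i' ++ p ∈ L₁ ∧
        q ++ wpow (p ++ q) j' ++ w ∈ L₂ by
      obtain ⟨i', j', rfl, hx', hy'⟩ := this
      exact ⟨_, hx', _, hy', append_wpow_append_append u p q w i' j'⟩
    -- keep a factor whose exponent is at most its threshold, pump the other one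
    by_cases hi : i ≤ N₁
    · exact ⟨i, n - 1 - i, by omega, hx, (h₂ j (by omega) _ (by omega) q _ w).1 hy⟩
    by_cases hj : j ≤ N₂
    · exact ⟨n - 1 - j, j, by omega, (h₁ i (by omega) _ (by omega) u _ p).1 hx, hy⟩
    exact ⟨N₁ + 1, n - N₁ - 2, by omega, (h₁ i (by omega) _ (by omega) u _ p).1 hx,
      (h₂ j (by omega) _ (by omega) q _ w).1 hy⟩
  · exact ⟨_, (h₁ _ (by omega) n (by omega) u v w').1 hx, y, hy, by simp⟩

end Language

theorem StarFree.exists_isAperiodicAbove {L : Language A} (h : StarFree L) :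
    ∃ N, L.IsAperiodicAbove N := by
  induction h with
  | finite L hL => exact Language.exists_isAperiodicAbove_of_finite hL
  | concat _ _ _ _ ih₁ ih₂ =>
    obtain ⟨N₁, h₁⟩ := ih₁
    obtain ⟨N₂, h₂⟩ := ih₂
    exact ⟨_, h₁.mul h₂⟩
  | union _ _ _ _ ih₁ ih₂ =>
    obtain ⟨N₁, h₁⟩ := ih₁
    obtain ⟨N₂, h₂⟩ := ih₂
    exact ⟨_, (h₁.mono (le_max_left N₁ N₂)).sup (h₂.mono (le_max_right N₁ N₂))⟩
  | inter _ _ _ _ ih₁ ih₂ =>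
    obtain ⟨N₁, h₁⟩ := ih₁
    obtain ⟨N₂, h₂⟩ := ih₂
    exact ⟨_, (h₁.mono (le_max_left N₁ N₂)).inf (h₂.mono (le_max_right N₁ N₂))⟩
  | compl _ _ ih =>
    obtain ⟨N, h⟩ := ih
    exact ⟨N, h.compl⟩

namespace StarFree

theorem bot : StarFree (⊥ : Language A) := finite _ Set.finite_empty

theorem top : StarFree (⊤ : Language A) := by simpa using compl _ bot

theorem singleton (w : List A) : StarFree ({w} : Language A) := finite _ (Set.finite_singleton w)

theorem iSup {ι : Type*} [Finite ι] {F : ι → Language A} (h : ∀ i, StarFree (F i)) :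
    StarFree (⨆ i, F i) := by
  have := Fintype.ofFinite ι
  classical
  suffices ∀ s : Finset ι, StarFree (⨆ i ∈ s, F i) by simpa using this Finset.univ
  intro s
  induction s using Finset.induction_on with
  | empty => simpa using bot
  | insert i s _ ih => rw [Finset.iSup_insert]; exact union _ _ (h i) ih

end StarFree

theorem starFree_setOf_mem (a : A) : StarFree ({w | a ∈ w} : Language A) := by
  have : ({w | a ∈ w} : Language A) = (⊤ : Language A) * {[a]} * ⊤ := by
    ext w
    constructor
    · intro h
      obtain ⟨s, t, rfl⟩ := List.append_of_mem h
      exact ⟨s ++ [a], ⟨s, trivial, [a], rfl, rfl⟩, t, trivial, by simp⟩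
    · rintro ⟨_, ⟨s, -, _, rfl, rfl⟩, t, -, rfl⟩
      simp
  rw [this]
  exact .concat _ _ (.concat _ _ .top (.singleton _)) .top

def wordsOver (B : Set A) : Language A := {w | ∀ a ∈ w, a ∈ B}

theorem starFree_wordsOver [Finite A] (B : Set A) : StarFree (wordsOver B) := by
  have : wordsOver B = (⨆ a : ↥Bᶜ, ({w | a.1 ∈ w} : Language A))ᶜ := by
    ext w
    change (∀ a ∈ w, a ∈ B) ↔ w ∈ (_ : Set (List A))
    simp [not_imp_comm]
  rw [this]
  exact .compl _ (.iSup fun a => starFree_setOf_mem a.1)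

def Monoid.IsAperiodic (M : Type*) [Monoid M] : Prop := ∀ x : M, ∃ n : ℕ, x ^ n = x ^ (n + 1)

section

variable {M : Type*} [Monoid M]

theorem Monoid.IsAperiodic.eq_one_of_mul_eq_one (hM : IsAperiodic M) {u c : M} (h : u * c = 1) :
    c = 1 := by
  have hpow : ∀ k : ℕ, u ^ k * c ^ k = 1 := by
    intro k
    induction k with
    | zero => simp
    | succ k ih => rw [pow_succ, pow_succ', mul_assoc, ← mul_assoc u, h, one_mul, ih]
  obtain ⟨n, hn⟩ := hM c
  calc c = u ^ n * c ^ n * c := by rw [hpow, one_mul]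
    _ = 1 := by rw [mul_assoc, ← pow_succ, ← hn, hpow]

/-- The local divisor of `M` at `c`: the set `cM ∩ Mc`, with the product `(u c) ∘ y = u y`. -/
def LocalDivisor (c : M) : Type _ := {x : M // (∃ u, u * c = x) ∧ ∃ v, c * v = x}

namespace LocalDivisor

variable {c : M}

instance : One (LocalDivisor c) := ⟨⟨c, ⟨1, one_mul c⟩, ⟨1, mul_one c⟩⟩⟩

noncomputable instance : Mul (LocalDivisor c) where
  mul x y := ⟨x.2.1.choose * y.1, by
    obtain ⟨⟨u, hu⟩, ⟨v, hv⟩⟩ := y.2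
    obtain ⟨v', hv'⟩ := x.2.2
    refine ⟨⟨x.2.1.choose * u, by rw [mul_assoc, hu]⟩, ⟨v' * v, ?_⟩⟩
    rw [← hv, ← mul_assoc _ c, x.2.1.choose_spec, ← hv', mul_assoc]⟩

theorem val_one : (1 : LocalDivisor c).1 = c := rfl

theorem val_mul_of_mul_eq {x : LocalDivisor c} {u : M} (hu : u * c = x.1) (y : LocalDivisor c) :
    (x * y).1 = u * y.1 := by
  obtain ⟨v, hv⟩ := y.2.2
  change x.2.1.choose * y.1 = u * y.1
  rw [← hv, ← mul_assoc, ← mul_assoc, x.2.1.choose_spec, hu]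

noncomputable instance : Monoid (LocalDivisor c) where
  mul_assoc x y z := by
    obtain ⟨u, hu⟩ := x.2.1
    obtain ⟨u', hu'⟩ := y.2.1
    have hxy : (u * u') * c = (x * y).1 := by rw [val_mul_of_mul_eq hu, ← hu', mul_assoc]
    apply Subtype.ext
    rw [val_mul_of_mul_eq hxy, val_mul_of_mul_eq hu, val_mul_of_mul_eq hu', mul_assoc]
  one_mul x := Subtype.ext (by rw [val_mul_of_mul_eq (u := 1) (by rw [one_mul]; rfl), one_mul])
  mul_one x := by
    obtain ⟨u, hu⟩ := x.2.1
    exact Subtype.ext (by rw [val_mul_of_mul_eq hu, val_one, hu])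

instance [Finite M] : Finite (LocalDivisor c) := Subtype.finite

theorem card_lt [Finite M] (hM : Monoid.IsAperiodic M) (hc : c ≠ 1) :
    Nat.card (LocalDivisor c) < Nat.card M :=
  Finite.card_subtype_lt (x := 1) fun ⟨⟨_, hu⟩, _⟩ => hc (hM.eq_one_of_mul_eq_one hu)

theorem val_pow_succ {x : LocalDivisor c} {u : M} (hu : u * c = x.1) (n : ℕ) :
    (x ^ (n + 1)).1 = u ^ n * x.1 := by
  induction n with
  | zero => simp
  | succ n ih => rw [pow_succ', val_mul_of_mul_eq hu, ih, ← mul_assoc, ← pow_succ']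

theorem isAperiodic (hM : Monoid.IsAperiodic M) : Monoid.IsAperiodic (LocalDivisor c) := by
  intro x
  obtain ⟨u, hu⟩ := x.2.1
  obtain ⟨n, hn⟩ := hM u
  exact ⟨n + 1, Subtype.ext (by rw [val_pow_succ hu, val_pow_succ hu, hn])⟩

def sandwich (c t : M) : LocalDivisor c := ⟨c * t * c, ⟨c * t, rfl⟩, ⟨t * c, (mul_assoc ..).symm⟩⟩

theorem val_prod_map_sandwich (ts : List M) :
    ((ts.map (sandwich c)).prod).1 = c * (ts.map (· * c)).prod := by
  induction ts with
  | nil => simp [val_one]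
  | cons t ts ih =>
    rw [List.map_cons, List.prod_cons, val_mul_of_mul_eq (u := c * t) rfl, ih]
    simp [mul_assoc]

end LocalDivisor

def wordFiber (f : A → M) (B : Set A) (m : M) : Language A :=
  {w | w ∈ wordsOver B ∧ (w.map f).prod = m}

section Blocks

variable (c : A)

theorem eq_of_append_cons_eq_append_cons {u u' r r' : List A} (hu : c ∉ u) (hu' : c ∉ u')
    (h : u ++ c :: r = u' ++ c :: r') : u = u' ∧ r = r' := by
  rcases List.append_eq_append_iff.1 h with ⟨s, rfl, hs⟩ | ⟨s, rfl, hs⟩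
  · cases s with
    | nil => simpa using hs
    | cons a s => obtain ⟨rfl, -⟩ := List.cons.inj hs; simp at hu'
  · cases s with
    | nil => simpa using hs.symm
    | cons a s => obtain ⟨rfl, -⟩ := List.cons.inj hs; simp at hu

theorem flatMap_append_singleton_injective {l l' : List (List A)} (hl : ∀ v ∈ l, c ∉ v)
    (hl' : ∀ v ∈ l', c ∉ v) (h : l.flatMap (· ++ [c]) = l'.flatMap (· ++ [c])) : l = l' := by
  induction l generalizing l' with
  | nil => cases l' <;> simp_all
  | cons u l ih =>
    cases l' with
    | nil => simp at h
    | cons u' l' =>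
      simp only [List.flatMap_cons, List.append_assoc, List.singleton_append] at h
      obtain ⟨rfl, h'⟩ := eq_of_append_cons_eq_append_cons c (hl u (by simp)) (hl' u' (by simp)) h
      rw [ih (fun v hv => hl v (by simp [hv])) (fun v hv => hl' v (by simp [hv])) h']

theorem exists_flatMap_append (w : List A) :
    ∃ (l : List (List A)) (u : List A),
      l.flatMap (· ++ [c]) ++ u = w ∧ (∀ v ∈ l, c ∉ v) ∧ c ∉ u := by
  induction w with
  | nil => exact ⟨[], [], rfl, by simp, by simp⟩
  | cons a w ih =>
    obtain ⟨l, u, rfl, hl, hu⟩ := ih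
    by_cases ha : a = c
    · exact ⟨[] :: l, u, by simp [ha], by simpa using hl, hu⟩
    cases l with
    | nil => exact ⟨[], a :: u, rfl, by simp, by simp [Ne.symm ha, hu]⟩
    | cons v l => exact ⟨(a :: v) :: l, u, rfl, by simpa [Ne.symm ha] using hl, hu⟩

theorem prod_map_flatMap_append_singleton (f : A → M) (l : List (List A)) :
    ((l.flatMap (· ++ [c])).map f).prod = ((l.map fun v => (v.map f).prod).map (· * f c)).prod := by
  induction l with
  | nil => rfl
  | cons v l ih => simp [ih, mul_assoc]

end Blocks

def blockLang (c : A) (B : Set A) (f : A → M) (K : Language M) : Language A :=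
  {z | ∃ l : List (List A), (∀ v ∈ l, v ∈ wordsOver B) ∧
    l.map (fun v => (v.map f).prod) ∈ K ∧ l.flatMap (· ++ [c]) = z}

theorem prod_map_append_flatMap_append (f : A → M) (c : A) (u₀ u : List A) (l : List (List A)) :
    ((u₀ ++ [c] ++ l.flatMap (· ++ [c]) ++ u).map f).prod = (u₀.map f).prod *
      (((l.map fun v => (v.map f).prod).map (LocalDivisor.sandwich (f c))).prod).1 *
      (u.map f).prod := by
  rw [LocalDivisor.val_prod_map_sandwich, ← prod_map_flatMap_append_singleton]
  simp [mul_assoc]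

section BlockLang

variable {c : A} {B : Set A} {f : A → M} {K K₁ K₂ : Language M}

theorem mem_blockLang_iff (hc : c ∉ B) {l : List (List A)} (hl : ∀ v ∈ l, v ∈ wordsOver B) :
    l.flatMap (· ++ [c]) ∈ blockLang c B f K ↔ l.map (fun v => (v.map f).prod) ∈ K := by
  refine ⟨fun ⟨l', hl', hK, h⟩ => ?_, fun hK => ⟨l, hl, hK, rfl⟩⟩
  have c_free : ∀ l : List (List A), (∀ v ∈ l, v ∈ wordsOver B) → ∀ v ∈ l, c ∉ v :=
    fun l hl v hv hcv => hc (hl v hv c hcv)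
  rwa [← flatMap_append_singleton_injective c (c_free l' hl') (c_free l hl) h]

theorem blockLang_sup : blockLang c B f (K₁ ⊔ K₂) = blockLang c B f K₁ ⊔ blockLang c B f K₂ := by
  ext z
  constructor
  · rintro ⟨l, hl, hK | hK, rfl⟩
    exacts [.inl ⟨l, hl, hK, rfl⟩, .inr ⟨l, hl, hK, rfl⟩]
  · rintro (⟨l, hl, hK, rfl⟩ | ⟨l, hl, hK, rfl⟩)
    exacts [⟨l, hl, .inl hK, rfl⟩, ⟨l, hl, .inr hK, rfl⟩]

theorem blockLang_iSup {ι : Type*} (K : ι → Language M) :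
    blockLang c B f (⨆ i, K i) = ⨆ i, blockLang c B f (K i) := by
  refine Language.ext fun z => ⟨?_, ?_⟩
  · rintro ⟨l, hl, hK, rfl⟩
    obtain ⟨i, hi⟩ := Language.mem_iSup.1 hK
    exact Language.mem_iSup.2 ⟨i, l, hl, hi, rfl⟩
  · intro hz
    obtain ⟨i, l, hl, hK, rfl⟩ := Language.mem_iSup.1 hz
    exact ⟨l, hl, Language.mem_iSup.2 ⟨i, hK⟩, rfl⟩

theorem blockLang_inf (hc : c ∉ B) :
    blockLang c B f (K₁ ⊓ K₂) = blockLang c B f K₁ ⊓ blockLang c B f K₂ := by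
  ext z
  constructor
  · rintro ⟨l, hl, ⟨hK₁, hK₂⟩, rfl⟩
    exact ⟨⟨l, hl, hK₁, rfl⟩, ⟨l, hl, hK₂, rfl⟩⟩
  · rintro ⟨⟨l, hl, hK₁, rfl⟩, h₂⟩
    exact ⟨l, hl, ⟨hK₁, (mem_blockLang_iff hc hl).1 h₂⟩, rfl⟩

theorem blockLang_compl (hc : c ∉ B) :
    blockLang c B f Kᶜ = blockLang c B f ⊤ ⊓ (blockLang c B f K)ᶜ := by
  ext z
  constructor
  · rintro ⟨l, hl, hK, rfl⟩
    exact ⟨⟨l, hl, trivial, rfl⟩, fun h => hK ((mem_blockLang_iff hc hl).1 h)⟩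
  · rintro ⟨⟨l, hl, -, rfl⟩, h⟩
    exact ⟨l, hl, fun hK => h ((mem_blockLang_iff hc hl).2 hK), rfl⟩

theorem blockLang_mul : blockLang c B f (K₁ * K₂) = blockLang c B f K₁ * blockLang c B f K₂ := by
  ext z
  constructor
  · rintro ⟨l, hl, ⟨x₁, hx₁, x₂, hx₂, hx⟩, rfl⟩
    obtain ⟨l₁, l₂, rfl, rfl, rfl⟩ := List.map_eq_append_iff.1 hx.symm
    exact ⟨_, ⟨l₁, fun v hv => hl v (by simp [hv]), hx₁, rfl⟩,
      _, ⟨l₂, fun v hv => hl v (by simp [hv]), hx₂, rfl⟩, by simp⟩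
  · rintro ⟨_, ⟨l₁, hl₁, hK₁, rfl⟩, _, ⟨l₂, hl₂, hK₂, rfl⟩, rfl⟩
    refine ⟨l₁ ++ l₂, ?_, ?_, by simp⟩
    · simp only [List.mem_append]
      exact fun v hv => hv.elim (hl₁ v) (hl₂ v)
    · rw [List.map_append]
      exact Language.append_mem_mul hK₁ hK₂

theorem blockLang_singleton_nil : blockLang c B f {[]} = {[]} := by
  ext z
  constructor
  · rintro ⟨l, -, hl, rfl⟩
    rw [List.map_eq_nil_iff.1 hl]
    rfl
  · rintro rfl
    exact ⟨[], by simp, rfl, rfl⟩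

theorem blockLang_singleton_singleton (m : M) :
    blockLang c B f {[m]} = wordFiber f B m * {[c]} := by
  ext z
  constructor
  · rintro ⟨l, hl, hm, rfl⟩
    obtain ⟨v, rfl, hv⟩ := List.map_eq_singleton_iff.1 hm
    exact ⟨v, ⟨hl v (by simp), hv⟩, [c], rfl, by simp⟩
  · rintro ⟨v, ⟨hv, hvm⟩, _, rfl, rfl⟩
    exact ⟨[v], by simpa using hv, by simp [hvm]; rfl, by simp⟩

theorem blockLang_top :
    blockLang c B f ⊤ = wordsOver (insert c B) ⊓ (1 ⊔ ⊤ * {[c]}) := by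
  ext z
  constructor
  · rintro ⟨l, hl, -, rfl⟩
    refine ⟨fun a ha => ?_, ?_⟩
    · simp only [List.mem_flatMap, List.mem_append, List.mem_singleton] at ha
      obtain ⟨v, hv, hav | rfl⟩ := ha
      exacts [Set.mem_insert_of_mem c (hl v hv a hav), Set.mem_insert a B]
    · rcases l.eq_nil_or_concat with rfl | ⟨l, v, rfl⟩
      · exact .inl rfl
      · exact .inr ⟨l.flatMap (· ++ [c]) ++ v, trivial, [c], rfl, by simp⟩
  · rintro ⟨hz, hz'⟩
    obtain ⟨l, u, rfl, hl, hu⟩ := exists_flatMap_append c z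
    obtain rfl : u = [] := by
      rcases u.eq_nil_or_concat with rfl | ⟨u, a, rfl⟩
      · rfl
      simp only [List.concat_eq_append, ← List.append_assoc] at hz' hu
      rcases hz' with h | ⟨y, -, _, rfl, h⟩
      · exact absurd ((Language.mem_one _).1 h) (by simp)
      · obtain ⟨-, h⟩ := List.append_inj' h rfl
        simp [List.singleton_inj.1 h] at hu
    refine ⟨l, fun v hv a ha => ?_, trivial, by simp⟩
    have := hz a (by simpa using ⟨v, hv, .inl ha⟩)
    rcases Set.mem_insert_iff.1 this with rfl | h
    exacts [absurd ha (hl v hv), h]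

end BlockLang

theorem starFree_blockLang [Finite A] {c : A} {B : Set A} {f : A → M} (hc : c ∉ B)
    (hB : ∀ m, StarFree (wordFiber f B m)) {K : Language M} (hK : StarFree K) :
    StarFree (blockLang c B f K) := by
  have of_singleton (x : List M) : StarFree (blockLang c B f {x}) := by
    induction x with
    | nil => rw [blockLang_singleton_nil]; exact .singleton _
    | cons m x ih =>
      have : ({m :: x} : Language M) = {[m]} * {x} := by
        rw [Language.mul_def]; exact (Set.image2_singleton (f := (· ++ ·)) (a := [m]) (b := x)).symm
      rw [this, blockLang_mul, blockLang_singleton_singleton]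
      exact .concat _ _ (.concat _ _ (hB m) (.singleton _)) ih
  induction hK with
  | finite K hK =>
    have : Finite {x // x ∈ K} := hK.to_subtype
    have hK_eq : K = ⨆ x : {x // x ∈ K}, {x.1} := (Set.iUnion_of_singleton_coe K).symm
    rw [hK_eq, blockLang_iSup]
    exact .iSup fun x => of_singleton x.1
  | concat _ _ _ _ ih₁ ih₂ => rw [blockLang_mul]; exact .concat _ _ ih₁ ih₂
  | union _ _ _ _ ih₁ ih₂ => rw [blockLang_sup]; exact .union _ _ ih₁ ih₂
  | inter _ _ _ _ ih₁ ih₂ => rw [blockLang_inf hc]; exact .inter _ _ ih₁ ih₂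
  | compl _ _ ih =>
    rw [blockLang_compl hc, blockLang_top]
    have hends : StarFree (1 ⊔ ⊤ * {[c]} : Language A) :=
      .union _ _ (.singleton []) (.concat _ _ .top (.singleton _))
    exact .inter _ _ (.inter _ _ (starFree_wordsOver _) hends) (.compl _ ih)

theorem starFree_wordFiber_of_forall_eq_one [Finite A] {f : A → M} {B : Set A}
    (h : ∀ c ∈ B, f c = 1) (m : M) : StarFree (wordFiber f B m) := by
  have hprod : ∀ w ∈ wordsOver B, (w.map f).prod = 1 := fun w hw =>
    List.prod_eq_one (by simpa using fun a ha => h a (hw a ha))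
  by_cases hm : m = 1
  · have : wordFiber f B m = wordsOver B := by
      ext w
      exact ⟨And.left, fun hw => ⟨hw, (hprod w hw).trans hm.symm⟩⟩
    exact this ▸ starFree_wordsOver B
  · have : wordFiber f B m = ⊥ := by
      ext w
      exact iff_of_false (fun ⟨hw, hwm⟩ => hm (hwm ▸ hprod w hw)) id
    exact this ▸ .bot

theorem mem_wordsOver_diff_singleton {B : Set A} {c : A} {w v : List A} (hw : w ∈ wordsOver B)
    (hvw : ∀ a ∈ v, a ∈ w) (hc : c ∉ v) : v ∈ wordsOver (B \ {c}) :=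
  fun a ha => ⟨hw a (hvw a ha), fun h => hc (h ▸ ha)⟩

open LocalDivisor in
/-- Cutting a word at the first and at the last occurrence of `c`, the middle part is evaluated
in the local divisor at `f c`. -/
theorem wordFiber_eq_sup_iSup {c : A} {B : Set A} (hc : c ∈ B) (f : A → M) (m : M) :
    wordFiber f B m = wordFiber f (B \ {c}) m ⊔
      ⨆ p : {p : M × LocalDivisor (f c) × M // p.1 * p.2.1.1 * p.2.2 = m},
        wordFiber f (B \ {c}) p.1.1 * {[c]} *
          blockLang c (B \ {c}) f (wordFiber (sandwich (f c)) Set.univ p.1.2.1) *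
          wordFiber f (B \ {c}) p.1.2.2 := by
  refine Language.ext fun w => ⟨?_, ?_⟩
  · rintro ⟨hw, rfl⟩
    by_cases hcw : c ∈ w
    · right
      obtain ⟨_ | ⟨u₀, l⟩, u, rfl, hl, hu⟩ := exists_flatMap_append c w
      · exact absurd (by simpa using hcw) hu
      let F := fun v : List A => (v.map f).prod
      refine Language.mem_iSup.2 ⟨⟨(F u₀, ((l.map F).map (sandwich (f c))).prod, F u),
        (prod_map_append_flatMap_append f c u₀ u l).symm⟩, ?_⟩
      refine ⟨_, ⟨_, ⟨u₀, ⟨?_, rfl⟩, [c], rfl, rfl⟩, _, ⟨l, ?_, ⟨fun _ _ => trivial, rfl⟩, rfl⟩,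
        rfl⟩, u, ⟨?_, rfl⟩, by simp⟩
      · exact mem_wordsOver_diff_singleton hw (fun a ha => by simp [ha]) (hl u₀ (by simp))
      · exact fun v hv => mem_wordsOver_diff_singleton hw (fun a ha =>
          List.mem_append_left _ (List.mem_flatMap_of_mem (List.mem_cons_of_mem u₀ hv)
            (List.mem_append_left _ ha)))
          (hl v (by simp [hv]))
      · exact mem_wordsOver_diff_singleton hw (fun a ha => by simp [ha]) hu
    · exact .inl ⟨mem_wordsOver_diff_singleton hw (fun _ => id) hcw, rfl⟩
  · rintro (⟨hw, rfl⟩ | hw)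
    · exact ⟨fun a ha => (hw a ha).1, rfl⟩
    obtain ⟨⟨⟨_, _, _⟩, hp⟩, hw⟩ := Language.mem_iSup.1 hw
    obtain ⟨_, ⟨_, ⟨u₀, ⟨hu₀, rfl⟩, _, rfl, rfl⟩, _, ⟨l, hl, ⟨-, rfl⟩, rfl⟩, rfl⟩, u, ⟨hu, rfl⟩,
      rfl⟩ := hw
    refine ⟨?_, ?_⟩
    · intro a ha
      simp only [List.mem_append, List.mem_flatMap, List.mem_singleton] at ha
      rcases ha with ((ha | rfl) | ⟨v, hv, ha | rfl⟩) | ha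
      exacts [(hu₀ a ha).1, hc, (hl v hv a ha).1, hc, (hu a ha).1]
    · exact (prod_map_append_flatMap_append f c u₀ u l).trans hp

end

universe u

theorem starFree_wordFiber {A M : Type u} [Finite A] [Monoid M] [Finite M]
    (hM : Monoid.IsAperiodic M) (f : A → M) (B : Set A) (m : M) :
    StarFree (wordFiber f B m) := by
  induction hk : Nat.card M using Nat.strong_induction_on generalizing A M with
  | _ k ih =>
  subst hk
  induction B using WellFoundedLT.induction generalizing m with
  | _ B ihB =>
  by_cases h1 : ∀ c ∈ B, f c = 1
  · exact starFree_wordFiber_of_forall_eq_one h1 m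
  push Not at h1
  obtain ⟨c, hcB, hc1⟩ := h1
  have hB : ∀ m, StarFree (wordFiber f (B \ {c}) m) :=
    ihB _ (Set.sdiff_singleton_ssubset.2 hcB)
  have hK : ∀ e, StarFree (wordFiber (LocalDivisor.sandwich (f c)) Set.univ e) :=
    fun e => ih _ (LocalDivisor.card_lt hM hc1) (LocalDivisor.isAperiodic hM) _ _ e rfl
  rw [wordFiber_eq_sup_iSup hcB]
  refine .union _ _ (hB m) (.iSup fun p => .concat _ _ (.concat _ _ ?_ ?_) (hB _))
  · exact .concat _ _ (hB _) (.singleton _)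
  · exact starFree_blockLang (by simp) hB (hK _)

theorem starFree_of_recognized {A M : Type u} [Finite A] [Monoid M] [Finite M]
    (hM : Monoid.IsAperiodic M) (f : A → M) {L : Language A}
    (hL : ∀ w w', (w.map f).prod = (w'.map f).prod → w ∈ L → w' ∈ L) : StarFree L := by
  have hL : L = ⨆ m : {m : M // ∃ w ∈ L, (w.map f).prod = m}, wordFiber f Set.univ m.1 := by
    refine Language.ext fun w => ⟨fun hw => ?_, fun hw => ?_⟩
    · exact Language.mem_iSup.2 ⟨⟨_, w, hw, rfl⟩, fun _ _ => trivial, rfl⟩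
    · obtain ⟨⟨_, w', hw', rfl⟩, -, hm⟩ := Language.mem_iSup.1 hw
      exact hL w' w hm.symm hw'
  rw [hL]
  exact .iSup fun m => starFree_wordFiber hM f _ _

theorem FreeMonoid.toList_pow (x : FreeMonoid A) (n : ℕ) : (x ^ n).toList = wpow x.toList n := by
  induction n with
  | zero => rfl
  | succ n ih => rw [pow_succ', FreeMonoid.toList_mul, ih, wpow]

theorem Con.prod_map_coe_of (c : Con (FreeMonoid A)) (w : List A) :
    (w.map fun a => ((FreeMonoid.of a : FreeMonoid A) : c.Quotient)).prod =
      ((FreeMonoid.ofList w : FreeMonoid A) : c.Quotient) := by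
  induction w with
  | nil => rfl
  | cons a w ih => rw [List.map_cons, List.prod_cons, ih, FreeMonoid.ofList_cons, Con.coe_mul]

def syntacticCon (L : Language A) : Con (FreeMonoid A) where
  r x y := ∀ u v : List A, u ++ x.toList ++ v ∈ L ↔ u ++ y.toList ++ v ∈ L
  iseqv := ⟨fun _ _ _ => Iff.rfl, fun h u v => (h u v).symm,
    fun h₁ h₂ u v => (h₁ u v).trans (h₂ u v)⟩
  mul' {x x' y y'} hx hy u v := by
    have h₁ := hx u (y.toList ++ v)
    have h₂ := hy (u ++ x'.toList) v
    simp only [FreeMonoid.toList_mul, List.append_assoc] at h₁ h₂ ⊢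
    exact h₁.trans h₂

namespace syntacticCon

variable {L : Language A}

theorem finite_quotient (hL : L.IsRegular) : Finite (syntacticCon L).Quotient := by
  let T (x : FreeMonoid A) (q : Set.range L.leftQuotient) : Set.range L.leftQuotient :=
    ⟨q.1.leftQuotient x.toList, by
      obtain ⟨u, hu⟩ := q.2
      exact ⟨u ++ x.toList, by rw [Language.leftQuotient_append, hu]⟩⟩
  have hT (x y : FreeMonoid A) : syntacticCon L x y ↔ T x = T y := by
    refine ⟨fun h => funext fun ⟨_, u, hu⟩ => Subtype.ext ?_, fun h u v => ?_⟩
    · subst hu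
      ext v
      simpa [T, List.append_assoc] using h u v
    · have := congrArg (v ∈ ·.1) (congrFun h ⟨_, u, rfl⟩)
      simpa [T, List.append_assoc] using this
  have := hL.finite_range_leftQuotient.to_subtype
  refine Finite.of_injective
    (fun q : (syntacticCon L).Quotient => q.liftOn T fun x y => (hT x y).1) ?_
  intro p q h
  induction p using Con.induction_on
  induction q using Con.induction_on
  exact Con.eq _ |>.2 ((hT _ _).2 h)

theorem isAperiodic_quotient {N : ℕ} (hL : L.IsAperiodicAbove N) :
    Monoid.IsAperiodic (syntacticCon L).Quotient := by
  intro x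
  induction x using Con.induction_on with | _ v =>
  refine ⟨N + 1, (Con.eq _).2 fun u w => ?_⟩
  rw [FreeMonoid.toList_pow, FreeMonoid.toList_pow]
  exact hL _ (by omega) _ (by omega) u v.toList w

end syntacticCon

end

/-- A regular language `L` is star-free iff there is `N` such that for all
`n > N` and all words `u,v,w`, `u v^n w ∈ L ↔ u v^(n+1) w ∈ L`. -/
theorem stmt1 {A : Type*} [Fintype A] (L : Language A) (hreg : L.IsRegular) :
    StarFree L ↔ ∃ N : ℕ, ∀ n > N, ∀ u v w : List A,
      (u ++ wpow v n ++ w ∈ L ↔ u ++ wpow v (n + 1) ++ w ∈ L) := by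
  simp only [← Language.isAperiodicAbove_iff_succ]
  refine ⟨StarFree.exists_isAperiodicAbove, fun ⟨N, hN⟩ => ?_⟩
  have := syntacticCon.finite_quotient hreg
  refine starFree_of_recognized (syntacticCon.isAperiodic_quotient hN)
    (fun a => (FreeMonoid.of a : (syntacticCon L).Quotient)) fun w w' h hw => ?_
  rw [Con.prod_map_coe_of, Con.prod_map_coe_of, Con.eq] at h
  simpa using (h [] []).1 (by simpa using hw)
end

section
/- Let G be a finitely generated abelian group with finite monoid generating set A = {x_1,...,x_r}. Then the set of all geodesic words over A is a piecewise excluding language: there is a finite set W of words over A such that a word over A is geodesic if and only if it contains no element of W as a (not necessarily consecutive) subsequence. -/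
/-!
In a commutative monoid a subsequence `u` of a geodesic word `w` is again geodesic: `w` is a
permutation of `u ++ v`, so a shorter word for `u` would give a shorter word for `w`. Hence the
non-geodesic words form an up-set for the subsequence order, and it is generated by its minimal
elements. These form an antichain, which is finite by Higman's lemma (the subsequence order on
words over a finite alphabet is a well-quasi-order); they are the excluded subsequences.
-/

/-- The element of `G` represented by a word over the alphabet. -/
def evalWord {G A : Type*} [Monoid G] (ev : A → G) (w : List A) : G :=
  (w.map ev).prod

/-- A word is geodesic if no shorter word represents the same element. -/
def IsGeodesic {G A : Type*} [Monoid G] (ev : A → G) (w : List A) : Prop :=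
  ∀ w' : List A, evalWord ev w' = evalWord ev w → w.length ≤ w'.length

/-- A language is piecewise excluding if membership is defined by excluding a
finite set of (not necessarily consecutive) subsequences. -/
def PiecewiseExcluding {A : Type*} (L : Language A) : Prop :=
  ∃ W : Finset (List A), L = {w | ∀ u ∈ W, ¬ u.Sublist w}

open List

section Sublist

variable {A : Type*}

theorem List.sublistForall₂_eq_iff {u w : List A} : SublistForall₂ Eq u w ↔ u <+ w := by
  simp [sublistForall₂_iff, forall₂_eq_eq_eq]

theorem Set.partiallyWellOrderedOn_sublist [Finite A] (S : Set (List A)) :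
    S.PartiallyWellOrderedOn (· <+ ·) := by
  have higman :=
    (Set.finite_univ (α := A)).partiallyWellOrderedOn.partiallyWellOrderedOn_sublistForall₂ Eq
  have hrel : SublistForall₂ (@Eq A) = (· <+ ·) := by ext; exact sublistForall₂_eq_iff
  exact hrel ▸ higman.mono fun _ _ _ _ => Set.mem_univ _

theorem List.exists_minimal_sublist_not_mem {L : Set (List A)} {w : List A} (hw : w ∉ L) :
    ∃ u, u <+ w ∧ u ∉ L ∧ ∀ v, v <+ u → v ∉ L → v = u := by
  obtain ⟨u, ⟨huw, hu⟩, hmin⟩ :=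
    (wellFounded_lt.onFun (f := length)).has_min {u | u <+ w ∧ u ∉ L}
      ⟨w, Sublist.refl w, hw⟩
  refine ⟨u, huw, hu, fun v hvu hv => hvu.eq_of_length_le ?_⟩
  exact not_lt.1 (hmin v ⟨hvu.trans huw, hv⟩)

theorem piecewiseExcluding_of_sublist_closed [Finite A] {L : Language A}
    (hL : ∀ ⦃u w⦄, u <+ w → w ∈ L → u ∈ L) : PiecewiseExcluding L := by
  set M : Set (List A) := {u | u ∉ L ∧ ∀ v, v <+ u → v ∉ L → v = u}
  have hM : M.Finite := by
    refine IsAntichain.finite_of_partiallyWellOrderedOn ?_ M.partiallyWellOrderedOn_sublist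
    exact fun u hu v hv hne huv => hne (hv.2 u huv hu.1)
  refine ⟨hM.toFinset, Set.ext fun w => ⟨fun hw u hu huw => ?_, fun hw => ?_⟩⟩
  · exact (hM.mem_toFinset.1 hu).1 (hL huw hw)
  · by_contra hwL
    obtain ⟨u, huw, hu⟩ := exists_minimal_sublist_not_mem hwL
    exact hw u (hM.mem_toFinset.2 hu) huw

end Sublist

theorem IsGeodesic.sublist {G A : Type*} [CommMonoid G] {ev : A → G} {u w : List A}
    (hw : IsGeodesic ev w) (huw : u <+ w) : IsGeodesic ev u := by
  obtain ⟨v, hperm⟩ := huw.exists_perm_append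
  intro u' hu'
  have hlen := hw (u' ++ v) <| by
    simp only [evalWord, map_append, prod_append] at hu' ⊢
    rw [(hperm.map ev).prod_eq, map_append, prod_append, hu']
  simp only [hperm.length_eq, length_append] at hlen
  omega

theorem stmt7_general {G : Type*} [CommGroup G] {r : ℕ} (ev : Fin r → G) :
    PiecewiseExcluding {w : List (Fin r) | IsGeodesic ev w} :=
  piecewiseExcluding_of_sublist_closed fun _ _ huw hw => hw.sublist huw

/-- For a finitely generated abelian group with finite monoid generating set
`x_1, …, x_r`, the language of geodesic words is piecewise excluding. -/
theorem stmt7 {G : Type*} [CommGroup G] {r : ℕ} (ev : Fin r → G)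
    (hgen : Submonoid.closure (Set.range ev) = ⊤) :
    PiecewiseExcluding {w : List (Fin r) | IsGeodesic ev w} :=
  stmt7_general ev
end

section
/- In the group G = ⟨a,b,c,d,r,s | ba²d = rcs, bd = s⟩ (which is free on a,b,c,d), for every k ≥ 0 the word b a^(2k) d is not geodesic with respect to the generating set {a,b,c,d,r,s} and their inverses: it represents the same element as the word (rc)^k s, which has length 2k+1 < 2k+2. -/
open FreeGroup in
/-- The relators of the presentation `⟨a,b,c,d,r,s ∣ ba²d = rcs, bd = s⟩`,
with generators indexed `a=0, b=1, c=2, d=3, r=4, s=5`. -/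
def rels : Set (FreeGroup (Fin 6)) :=
  { (of 1 * of 0 * of 0 * of 3) * (of 4 * of 2 * of 5)⁻¹,
    (of 1 * of 3) * (of 5)⁻¹ }

/-- The group `G = ⟨a,b,c,d,r,s ∣ ba²d = rcs, bd = s⟩`. -/
abbrev Gp : Type := PresentedGroup rels

/-- The inverse-closed alphabet on the six generators: `(i, true)` is the
generator `i` and `(i, false)` is its inverse. -/
def ev6 : Fin 6 × Bool → Gp :=
  fun p => cond p.2 (PresentedGroup.of p.1) (PresentedGroup.of p.1)⁻¹

/-- The positive letter for generator `i`. -/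
def gl (i : Fin 6) : Fin 6 × Bool := (i, true)

def π6 : FreeGroup (Fin 6) →* Gp := QuotientGroup.mk' _

lemma pi_of (i : Fin 6) : π6 (FreeGroup.of i) = PresentedGroup.of i := rfl

lemma rel1 : (PresentedGroup.of 1 : Gp) * PresentedGroup.of 0 * PresentedGroup.of 0 *
    PresentedGroup.of 3 = PresentedGroup.of 4 * PresentedGroup.of 2 * PresentedGroup.of 5 := by
  have h : π6 ((FreeGroup.of 1 * .of 0 * .of 0 * .of 3) * (.of 4 * .of 2 * .of 5)⁻¹) = 1 :=
    (QuotientGroup.eq_one_iff _).mpr (Subgroup.subset_normalClosure (Or.inl rfl))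
  rw [map_mul, map_inv, mul_inv_eq_one] at h
  simpa only [map_mul, pi_of] using h

lemma rel2 : (PresentedGroup.of 1 : Gp) * PresentedGroup.of 3 = PresentedGroup.of 5 := by
  have h : π6 ((FreeGroup.of 1 * .of 3) * (.of 5)⁻¹) = 1 :=
    (QuotientGroup.eq_one_iff _).mpr (Subgroup.subset_normalClosure (Or.inr rfl))
  rw [map_mul, map_inv, mul_inv_eq_one] at h
  simpa only [map_mul, pi_of] using h

lemma hrc : (PresentedGroup.of 4 : Gp) * PresentedGroup.of 2 =
    PresentedGroup.of 1 * (PresentedGroup.of 0) ^ 2 * (PresentedGroup.of 1)⁻¹ := by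
  have h1 := rel1
  rw [← rel2] at h1
  have h2 : (PresentedGroup.of 4 : Gp) * PresentedGroup.of 2 =
      (PresentedGroup.of 1 * PresentedGroup.of 0 * PresentedGroup.of 0 * PresentedGroup.of 3) *
      (PresentedGroup.of 1 * PresentedGroup.of 3)⁻¹ := by
    rw [h1]; group
  rw [h2, sq]
  group

lemma key (k : ℕ) : (PresentedGroup.of 1 : Gp) * (PresentedGroup.of 0) ^ (2 * k) *
    PresentedGroup.of 3 = (PresentedGroup.of 4 * PresentedGroup.of 2) ^ k * PresentedGroup.of 5 := by
  induction k with
  | zero => simpa using rel2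
  | succ n ih =>
    calc (PresentedGroup.of 1 : Gp) * (PresentedGroup.of 0) ^ (2 * (n + 1)) * PresentedGroup.of 3
        = (PresentedGroup.of 1 * (PresentedGroup.of 0) ^ 2 * (PresentedGroup.of 1)⁻¹) *
          (PresentedGroup.of 1 * (PresentedGroup.of 0) ^ (2 * n) * PresentedGroup.of 3) := by
          rw [show 2 * (n + 1) = 2 + 2 * n by ring, pow_add]; group
      _ = (PresentedGroup.of 4 * PresentedGroup.of 2) *
          ((PresentedGroup.of 4 * PresentedGroup.of 2) ^ n * PresentedGroup.of 5) := by
          rw [← hrc, ih]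
      _ = (PresentedGroup.of 4 * PresentedGroup.of 2) ^ (n + 1) * PresentedGroup.of 5 := by
          rw [pow_succ']; group

lemma evalWord_append {G A : Type*} [Monoid G] (ev : A → G) (u v : List A) :
    evalWord ev (u ++ v) = evalWord ev u * evalWord ev v := by
  simp [evalWord]

lemma eval_wpow {G A : Type*} [Monoid G] (ev : A → G) (v : List A) (k : ℕ) :
    evalWord ev (wpow v k) = (evalWord ev v) ^ k := by
  induction k with
  | zero => simp [wpow, evalWord]
  | succ n ih => simp [wpow, evalWord, pow_succ'] at *; simp [ih]

lemma wpow_length {A : Type*} (v : List A) (k : ℕ) : (wpow v k).length = v.length * k := by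
  induction k with
  | zero => simp [wpow]
  | succ n ih => simp [wpow, ih]; ring

/-- For every `k ≥ 0`, the word `b a^(2k) d` is not geodesic: it equals
`(rc)^k s`, of length `2k+1 < 2k+2`. -/
theorem stmt10 (k : ℕ) :
    ¬ IsGeodesic ev6 (gl 1 :: (List.replicate (2 * k) (gl 0) ++ [gl 3])) ∧
    evalWord ev6 (gl 1 :: (List.replicate (2 * k) (gl 0) ++ [gl 3])) =
      evalWord ev6 (wpow [gl 4, gl 2] k ++ [gl 5]) ∧
    (wpow [gl 4, gl 2] k ++ [gl 5]).length = 2 * k + 1 ∧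
    (gl 1 :: (List.replicate (2 * k) (gl 0) ++ [gl 3])).length = 2 * k + 2 := by
  have hlen : (wpow [gl 4, gl 2] k ++ [gl 5]).length = 2 * k + 1 := by
    simp [wpow_length]
  have heq : evalWord ev6 (gl 1 :: (List.replicate (2 * k) (gl 0) ++ [gl 3])) =
      evalWord ev6 (wpow [gl 4, gl 2] k ++ [gl 5]) := by
    have h1 : evalWord ev6 (gl 1 :: (List.replicate (2 * k) (gl 0) ++ [gl 3])) =
        (PresentedGroup.of 1 : Gp) * (PresentedGroup.of 0) ^ (2 * k) * PresentedGroup.of 3 := by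
      simp [evalWord, ev6, gl, List.prod_replicate, mul_assoc]
    have h2 : evalWord ev6 (wpow [gl 4, gl 2] k ++ [gl 5]) =
        (PresentedGroup.of 4 * PresentedGroup.of 2 : Gp) ^ k * PresentedGroup.of 5 := by
      rw [evalWord_append, eval_wpow]
      simp [evalWord, ev6, gl]
    rw [h1, h2, key]
  refine ⟨?_, heq, hlen, by simp⟩
  intro hg
  have h := hg _ heq.symm
  rw [hlen] at h
  simp at h
end
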